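/- (Convergence of the fixed-stepsize subgradient method.) Suppose g is μ-sharp on 𝒳 with 𝒳* nonempty, fix L with 0 < μ ≤ L, set τ = μ/L, fix γ ∈ (0,1), and fix a stepsize α with 0 < α < (γτ/√(1 + 2τ²))·(μ/ρ). Suppose every weak subgradient of g at every point of the tube 𝒯₁ has norm at most L. Let x : ℕ → ℝ^d and ζ : ℕ → ℝ^d be sequences with x₀ ∈ 𝒯_γ, such that for every k the vector ζ_k is a weak subgradient of g at x_k and x_{k+1} = proj_𝒳( x_k − α·ζ_k/‖ζ_k‖ ), with the convention that x_{k+1} = x_k when ζ_k = 0. Write E_k = dist²(x_k, 𝒳*), define E* = ( αL/(μ + √(μ² − αρL)) )², D = √( max{E₀, 2α² + E*} ), and q = 1 + (α/L)·(ρ − μ/D). Then q ∈ (0,1), and for every k ≥ 0 one has √(E_k) ≤ D ≤ γμ/ρ and E_k − E* ≤ max{ q^k·(E₀ − E*), 2α² }. -/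

import Mathlib

/-!
Write `e_k = dist(x_k, 𝒳*)`. Expanding the projected step against a point `u ∈ 𝒳*`, the weak
subgradient inequality and sharpness give, once `u` approaches the nearest point, the scalar
recursion `L e_{k+1}² ≤ (L + αρ) e_k² - 2αμ e_k + α²L`, valid while `e_k < μ/ρ` so that
`‖ζ_k‖ ≤ L`. Its fixed point `s = √E*` is the smaller root of `ρ s² - 2μ s + αL`. Above `s` the
recursion contracts `e² - s²` by the factor `q` (this is where `e_k ≤ D` enters), below `s` it gives
`e_{k+1}² ≤ s² + α²`; either way `e_{k+1} ≤ D`, and the stepsize bound makes `D ≤ γμ/ρ < μ/ρ`, so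
the iterates never leave the tube on which subgradients are bounded by `L`.
-/

open Metric
open scoped InnerProductSpace

section WeakSubgradient

variable {F : Type*} [NormedAddCommGroup F] [InnerProductSpace ℝ F]

def IsWeakSubgradient (ρ : ℝ) (g : F → ℝ) (x v : F) : Prop :=
  ∀ y, g x + ⟪v, y - x⟫_ℝ - ρ / 2 * ‖y - x‖ ^ 2 ≤ g y

theorem norm_sub_le_of_forall_dist_le {K : Set F} (hK : Convex ℝ K) {z p u : F} (hp : p ∈ K)
    (hmin : ∀ y ∈ K, dist z p ≤ dist z y) (hu : u ∈ K) : ‖u - p‖ ≤ ‖u - z‖ := by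
  have : Nonempty K := ⟨⟨p, hp⟩⟩
  have hinf : ‖z - p‖ = ⨅ w : K, ‖z - w‖ :=
    le_antisymm (le_ciInf fun w => by simpa only [dist_eq_norm] using hmin w w.2)
      (ciInf_le (f := fun w : K => ‖z - w‖)
        ⟨0, Set.forall_mem_range.2 fun w => norm_nonneg _⟩ ⟨p, hp⟩)
  have hobtuse : ⟪z - p, u - p⟫_ℝ ≤ 0 := (norm_eq_iInf_iff_real_inner_le_zero hK hp).1 hinf u hu
  have hexpand : ‖u - z‖ ^ 2 = ‖u - p‖ ^ 2 - 2 * ⟪u - p, z - p⟫_ℝ + ‖z - p‖ ^ 2 := by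
    rw [← norm_sub_sq_real, sub_sub_sub_cancel_right]
  rw [real_inner_comm] at hobtuse
  exact (pow_le_pow_iff_left₀ (norm_nonneg _) (norm_nonneg _) two_ne_zero).1
    (by nlinarith [sq_nonneg ‖z - p‖])

theorem le_mul_infDist_sq_add {E : Type*} [PseudoMetricSpace E] {S : Set E} (hS : S.Nonempty)
    {x : E} {a A B : ℝ} (hA : 0 ≤ A) (h : ∀ u ∈ S, a ≤ A * dist x u ^ 2 + B) :
    a ≤ A * infDist x S ^ 2 + B := by
  rcases le_or_gt a B with hab | hab
  · linarith [mul_nonneg hA (sq_nonneg (infDist x S))]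
  obtain ⟨u, hu⟩ := hS
  have hA0 : 0 < A := hA.lt_of_ne fun h0 => by linarith [h0 ▸ h u hu]
  have hr : √((a - B) / A) ≤ infDist x S :=
    (le_infDist ⟨u, hu⟩).2 fun y hy =>
      Real.sqrt_le_iff.2 ⟨dist_nonneg, by rw [div_le_iff₀ hA0]; linarith [h y hy]⟩
  have := (Real.sqrt_le_iff.1 hr).2
  rw [div_le_iff₀ hA0] at this
  linarith

variable {g : F → ℝ} {S : Set F} {x : F} {μ ρ gstar : ℝ}

theorem infDist_eq_zero_of_isWeakSubgradient_zero (hS : S.Nonempty)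
    (hgS : ∀ u ∈ S, g u = gstar) (hsharp : μ * infDist x S ≤ g x - gstar)
    (h0 : IsWeakSubgradient ρ g x 0) (hρ : 0 ≤ ρ) (hx : ρ * infDist x S < 2 * μ) :
    infDist x S = 0 := by
  have hquad : μ * infDist x S ≤ ρ / 2 * infDist x S ^ 2 + 0 :=
    le_mul_infDist_sq_add hS (by positivity) fun u hu => by
      have := h0 u
      rw [inner_zero_left, hgS u hu, ← dist_eq_norm'] at this
      linarith
  nlinarith [infDist_nonneg (x := x) (s := S)]

theorem mul_infDist_sq_le_of_projected_step {K : Set F} {v p : F} {L α : ℝ} (hK : Convex ℝ K)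
    (hSK : S ⊆ K) (hS : S.Nonempty) (hgS : ∀ u ∈ S, g u = gstar)
    (hsharp : μ * infDist x S ≤ g x - gstar) (hv : IsWeakSubgradient ρ g x v) (hv0 : v ≠ 0)
    (hvL : ‖v‖ ≤ L) (hα : 0 ≤ α) (hρ : 0 ≤ ρ) (hx : ρ * infDist x S ≤ 2 * μ) (hp : p ∈ K)
    (hmin : ∀ y ∈ K, dist (x - (α / ‖v‖) • v) p ≤ dist (x - (α / ‖v‖) • v) y) :
    L * infDist p S ^ 2 ≤
      (L + α * ρ) * infDist x S ^ 2 - 2 * α * μ * infDist x S + α ^ 2 * L := by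
  set e := infDist x S
  set c := α / ‖v‖
  have hc : 0 ≤ c := by positivity
  have hcv : c * ‖v‖ = α := div_mul_cancel₀ _ (norm_ne_zero_iff.2 hv0)
  have hdist : ∀ u ∈ S, infDist p S ^ 2 ≤ (1 + c * ρ) * dist x u ^ 2 + (α ^ 2 - 2 * c * μ * e) := by
    intro u hu
    have hnext : infDist p S ≤ ‖u - (x - c • v)‖ :=
      ((infDist_le_dist_of_mem hu).trans_eq (dist_eq_norm' p u)).trans
        (norm_sub_le_of_forall_dist_le hK hp hmin (hSK hu))
    have hexpand : ‖u - (x - c • v)‖ ^ 2 = dist x u ^ 2 + 2 * c * ⟪v, u - x⟫_ℝ + α ^ 2 := by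
      rw [show u - (x - c • v) = (u - x) + c • v by abel, norm_add_sq_real, norm_smul,
        inner_smul_right, real_inner_comm, dist_eq_norm', Real.norm_of_nonneg hc, hcv]
      ring
    have hdescent : ⟪v, u - x⟫_ℝ ≤ ρ / 2 * dist x u ^ 2 - μ * e := by
      have := hv u
      rw [hgS u hu, ← dist_eq_norm'] at this
      linarith
    calc infDist p S ^ 2 ≤ ‖u - (x - c • v)‖ ^ 2 := pow_le_pow_left₀ infDist_nonneg hnext 2
      _ ≤ _ := by rw [hexpand]; nlinarith [mul_le_mul_of_nonneg_left hdescent hc]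
  have hlim := le_mul_infDist_sq_add hS (by positivity) hdist
  -- `ρ e² - 2μe ≤ 0`, so the coefficient `c = α / ‖v‖` may be replaced by its lower bound `α / L`
  have hneg : ρ * e ^ 2 - 2 * μ * e ≤ 0 := by nlinarith [infDist_nonneg (x := x) (s := S)]
  have hcL : α ≤ c * L := hcv ▸ mul_le_mul_of_nonneg_left hvL hc
  have hL : 0 ≤ L := (norm_nonneg v).trans hvL
  nlinarith [mul_le_mul_of_nonpos_right hcL hneg, mul_le_mul_of_nonneg_left hlim hL]

theorem mul_infDist_sq_le_of_step {K : Set F} {v p : F} {L α : ℝ} (hK : Convex ℝ K)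
    (hSK : S ⊆ K) (hS : S.Nonempty) (hgS : ∀ u ∈ S, g u = gstar)
    (hsharp : μ * infDist x S ≤ g x - gstar) (hv : IsWeakSubgradient ρ g x v) (hvL : ‖v‖ ≤ L)
    (hα : 0 ≤ α) (hρ : 0 ≤ ρ) (hx : ρ * infDist x S < 2 * μ)
    (hmove : v ≠ 0 → p ∈ K ∧ ∀ y ∈ K, dist (x - (α / ‖v‖) • v) p ≤ dist (x - (α / ‖v‖) • v) y)
    (hstay : v = 0 → p = x) :
    L * infDist p S ^ 2 ≤
      (L + α * ρ) * infDist x S ^ 2 - 2 * α * μ * infDist x S + α ^ 2 * L := by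
  by_cases hv0 : v = 0
  · subst hv0
    rw [hstay rfl, infDist_eq_zero_of_isWeakSubgradient_zero hS hgS hsharp hv hρ hx]
    linarith [mul_nonneg (sq_nonneg α) ((norm_nonneg _).trans hvL)]
  · obtain ⟨hp, hmin⟩ := hmove hv0
    exact mul_infDist_sq_le_of_projected_step hK hSK hS hgS hsharp hv hv0 hvL hα hρ hx.le hp hmin

end WeakSubgradient

theorem quadratic_root_of_eq_div_add_sqrt {a b c s : ℝ} (hb : 0 < b) (hc : 0 ≤ c)
    (hac : a * c ≤ b ^ 2) (hs : s = c / (b + √(b ^ 2 - a * c))) :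
    a * s ^ 2 - 2 * b * s + c = 0 ∧ a * s ≤ b ∧ s * b ≤ c ∧ 0 ≤ s := by
  set r := √(b ^ 2 - a * c)
  have hr : 0 ≤ r := Real.sqrt_nonneg _
  have hr2 : r ^ 2 = b ^ 2 - a * c := Real.sq_sqrt (by linarith)
  have hs0 : 0 ≤ s := hs ▸ by positivity
  have hsr : s * (b + r) = c := by rw [hs]; field_simp
  have has : a * s = b - r :=
    mul_right_cancel₀ (by positivity : b + r ≠ 0) (by linear_combination a * hsr + hr2)
  exact ⟨by linear_combination s * has - hsr, by linarith, by nlinarith [mul_nonneg hs0 hr], hs0⟩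

theorem two_mul_sq_add_sq_lt_of_lt_stepsize {μ ρ L γ α : ℝ} (hμ : 0 < μ) (hρ : 0 < ρ)
    (hL : 0 < L) (hα : 0 ≤ α)
    (hα' : α < γ * (μ / L) / √(1 + 2 * (μ / L) ^ 2) * (μ / ρ)) :
    2 * α ^ 2 + (α * L / μ) ^ 2 < (γ * μ / ρ) ^ 2 := by
  set S := √(1 + 2 * (μ / L) ^ 2)
  have hS : 0 < S := by positivity
  have hS2 : L ^ 2 * S ^ 2 = L ^ 2 + 2 * μ ^ 2 := by
    rw [Real.sq_sqrt (by positivity)]; field_simp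
  have hlin : α * ρ * L * S < γ * μ ^ 2 :=
    calc α * ρ * L * S = α * (ρ * L * S) := by ring
      _ < γ * (μ / L) / S * (μ / ρ) * (ρ * L * S) := by gcongr
      _ = γ * μ ^ 2 := by field_simp
  have hsq : (α * ρ) ^ 2 * (L ^ 2 + 2 * μ ^ 2) < (γ * μ ^ 2) ^ 2 :=
    calc (α * ρ) ^ 2 * (L ^ 2 + 2 * μ ^ 2) = (α * ρ * L * S) ^ 2 := by rw [← hS2]; ring
      _ < (γ * μ ^ 2) ^ 2 := pow_lt_pow_left₀ hlin (by positivity) two_ne_zero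
  rw [div_pow, div_pow, ← sub_pos]
  have : (γ * μ) ^ 2 / ρ ^ 2 - (2 * α ^ 2 + (α * L) ^ 2 / μ ^ 2) =
      ((γ * μ ^ 2) ^ 2 - (α * ρ) ^ 2 * (L ^ 2 + 2 * μ ^ 2)) / (ρ ^ 2 * μ ^ 2) := by
    field_simp; ring
  rw [this]
  exact div_pos (by linarith) (by positivity)

theorem root_bounds_of_lt_stepsize {μ ρ L γ α s : ℝ} (hμ : 0 < μ) (hρ : 0 < ρ) (hL : 0 < L)
    (hγ0 : 0 ≤ γ) (hγ1 : γ ≤ 1) (hα : 0 ≤ α)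
    (hα' : α < γ * (μ / L) / √(1 + 2 * (μ / L) ^ 2) * (μ / ρ))
    (hs : s = α * L / (μ + √(μ ^ 2 - α * ρ * L))) :
    ρ * s ^ 2 - 2 * μ * s + α * L = 0 ∧ ρ * s ≤ μ ∧ 0 ≤ s ∧
      2 * α ^ 2 + s ^ 2 < (γ * μ / ρ) ^ 2 := by
  have hαγ := two_mul_sq_add_sq_lt_of_lt_stepsize hμ hρ hL hα hα'
  have hαρL : ρ * (α * L) ≤ μ ^ 2 := by
    have h : α * L / μ < μ / ρ :=
      ((pow_lt_pow_iff_left₀ (by positivity) (by positivity) two_ne_zero).1 (by nlinarith)).trans_le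
        (div_le_div_of_nonneg_right (mul_le_of_le_one_left hμ.le hγ1) hρ.le)
    rw [div_lt_div_iff₀ hμ hρ] at h
    nlinarith
  obtain ⟨hroot, hρs, hsμ, hs0⟩ :=
    quadratic_root_of_eq_div_add_sqrt (s := s) hμ (by positivity) hαρL
    (by rw [hs, mul_left_comm ρ, ← mul_assoc])
  have hsαL : s ≤ α * L / μ := by rw [le_div_iff₀ hμ]; exact hsμ
  exact ⟨hroot, hρs, hs0, by nlinarith [pow_le_pow_left₀ hs0 hsαL 2]⟩

theorem contractionFactor_mem_Ioo {L α ρ μ D q : ℝ} (hμ : 0 < μ) (hμL : μ ≤ L) (hα : 0 < α)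
    (hρ : 0 < ρ) (hαD : α < D) (hD : D < μ / ρ) (hq : q = 1 + α / L * (ρ - μ / D)) :
    0 < q ∧ q < 1 := by
  have hL : 0 < L := hμ.trans_le hμL
  have hD0 : 0 < D := hα.trans hαD
  have hρD : ρ < μ / D := by rw [lt_div_iff₀ hD0]; rw [lt_div_iff₀ hρ] at hD; linarith
  refine ⟨?_, by rw [hq]; nlinarith [mul_pos (div_pos hα hL) (sub_pos.2 hρD)]⟩
  have hαμ : α / L * (μ / D) < 1 := by
    rw [div_mul_div_comm, div_lt_one (by positivity)]
    nlinarith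
  rw [hq, mul_sub]
  nlinarith [mul_pos (div_pos hα hL) hρ]

theorem sq_sub_sq_le_max_of_recursion {L α ρ μ s D e e' q : ℝ} (hL : 0 < L) (hα : 0 ≤ α)
    (hρ : 0 ≤ ρ) (hμ : 0 ≤ μ) (hroot : ρ * s ^ 2 - 2 * μ * s + α * L = 0) (hρs : ρ * s ≤ μ)
    (hsD : s ≤ D) (hD : 0 < D) (he : 0 ≤ e) (heD : e ≤ D) (hq : q = 1 + α / L * (ρ - μ / D))
    (hrec : L * e' ^ 2 ≤ (L + α * ρ) * e ^ 2 - 2 * α * μ * e + α ^ 2 * L) :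
    e' ^ 2 - s ^ 2 ≤ max (q * (e ^ 2 - s ^ 2)) (α ^ 2) := by
  rcases le_or_gt s e with hse | hes
  · apply le_max_of_le_left
    have hqLD : L * D * (q * (e ^ 2 - s ^ 2)) = (L * D + α * ρ * D - α * μ) * (e ^ 2 - s ^ 2) := by
      rw [hq]; field_simp; ring
    -- the gap between the two sides is `αμ (e - s)(2D - e - s)`
    have hgap : 0 ≤ α * μ * ((e - s) * (2 * D - e - s)) :=
      mul_nonneg (mul_nonneg hα hμ) (mul_nonneg (by linarith) (by linarith))
    have : L * D * (e' ^ 2 - s ^ 2) ≤ L * D * (q * (e ^ 2 - s ^ 2)) := by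
      linear_combination D * hrec + hgap + α * D * hroot - hqLD
    exact le_of_mul_le_mul_left this (by positivity)
  · apply le_max_of_le_right
    have hρe : ρ * e ≤ μ := (mul_le_mul_of_nonneg_left hes.le hρ).trans hρs
    have : L * e' ^ 2 ≤ L * (s ^ 2 + α ^ 2) := by
      nlinarith [mul_nonneg hα (mul_nonneg he (sub_nonneg.2 hρe)), mul_nonneg (mul_nonneg hα hμ) he,
        mul_le_mul_of_nonneg_left (pow_le_pow_left₀ he hes.le 2) hL.le]
    linarith [le_of_mul_le_mul_left this hL]

theorem le_of_sq_sub_sq_le_max {s e D e' q α : ℝ} (hq0 : 0 ≤ q) (hq1 : q ≤ 1) (he : 0 ≤ e)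
    (heD : e ≤ D) (hsD : s ^ 2 + α ^ 2 ≤ D ^ 2) (he' : 0 ≤ e')
    (h : e' ^ 2 - s ^ 2 ≤ max (q * (e ^ 2 - s ^ 2)) (α ^ 2)) : e' ≤ D := by
  have hD : 0 ≤ D := he.trans heD
  refine (pow_le_pow_iff_left₀ he' hD two_ne_zero).1 ?_
  rcases le_max_iff.1 h with h | h
  · nlinarith [mul_le_mul_of_nonneg_left (pow_le_pow_left₀ he heD 2) hq0,
      mul_le_mul_of_nonneg_left (show s ^ 2 ≤ D ^ 2 by nlinarith) (sub_nonneg.2 hq1)]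
  · linarith

theorem le_max_pow_mul_of_le_max_mul {a : ℕ → ℝ} {q b : ℝ} (hq0 : 0 ≤ q) (hq1 : q ≤ 1)
    (hb : 0 ≤ b) (h : ∀ k, a (k + 1) ≤ max (q * a k) b) (k : ℕ) :
    a k ≤ max (q ^ k * a 0) b := by
  induction k with
  | zero => simp
  | succ k ih =>
    calc a (k + 1) ≤ max (q * max (q ^ k * a 0) b) b :=
          (h k).trans (max_le_max_right b (mul_le_mul_of_nonneg_left ih hq0))
      _ ≤ max (q ^ (k + 1) * a 0) b := by
          rw [mul_max_of_nonneg _ _ hq0, pow_succ', mul_assoc]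
          exact max_le (max_le_max_left _ (mul_le_of_le_one_left hb hq1)) (le_max_right _ _)

theorem sq_sub_sq_le_max_pow_of_recursion {e : ℕ → ℝ} {L α ρ μ s D q : ℝ} (hL : 0 < L)
    (hα : 0 ≤ α) (hρ : 0 ≤ ρ) (hμ : 0 ≤ μ) (hroot : ρ * s ^ 2 - 2 * μ * s + α * L = 0)
    (hρs : ρ * s ≤ μ) (hs : 0 ≤ s) (hD : 0 < D) (hsD : s ^ 2 + α ^ 2 ≤ D ^ 2)
    (hq : q = 1 + α / L * (ρ - μ / D)) (hq0 : 0 ≤ q) (hq1 : q ≤ 1) (he : ∀ k, 0 ≤ e k)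
    (he0 : e 0 ≤ D)
    (hrec : ∀ k, e k ≤ D →
      L * e (k + 1) ^ 2 ≤ (L + α * ρ) * e k ^ 2 - 2 * α * μ * e k + α ^ 2 * L) (k : ℕ) :
    e k ≤ D ∧ e k ^ 2 - s ^ 2 ≤ max (q ^ k * (e 0 ^ 2 - s ^ 2)) (2 * α ^ 2) := by
  have hsD' : s ≤ D := (pow_le_pow_iff_left₀ hs hD.le two_ne_zero).1 (by nlinarith)
  have step (k : ℕ) (hk : e k ≤ D) :
      e (k + 1) ≤ D ∧ e (k + 1) ^ 2 - s ^ 2 ≤ max (q * (e k ^ 2 - s ^ 2)) (2 * α ^ 2) := by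
    have h := sq_sub_sq_le_max_of_recursion hL hα hρ hμ hroot hρs hsD' hD (he k) hk hq (hrec k hk)
    exact ⟨le_of_sq_sub_sq_le_max hq0 hq1 (he k) hk hsD (he _) h,
      h.trans (max_le_max_left _ (by nlinarith))⟩
  have hinv (k : ℕ) : e k ≤ D := Nat.rec he0 (fun k ih => (step k ih).1) k
  exact ⟨hinv k, le_max_pow_mul_of_le_max_mul (a := fun k => e k ^ 2 - s ^ 2) hq0 hq1
    (by positivity) (fun k => (step k (hinv k)).2) k⟩

theorem fixed_stepsize_convergence_general
    {d : ℕ}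
    (g : EuclideanSpace ℝ (Fin d) → ℝ) (μ ρ L γ α : ℝ)
    (hμ : 0 < μ) (hρ : 0 < ρ) (hμL : μ ≤ L) (hγ : γ ∈ Set.Ioo (0 : ℝ) 1)
    (hα : 0 < α)
    (hα' : α < (γ * (μ / L) / Real.sqrt (1 + 2 * (μ / L) ^ 2)) * (μ / ρ))
    (X Xstar : Set (EuclideanSpace ℝ (Fin d)))
    (hXcv : Convex ℝ X)
    (hXstar : Xstar = {x | x ∈ X ∧ ∀ y ∈ X, g x ≤ g y})
    (hXstarNe : Xstar.Nonempty)
    -- `gstar` is the minimal value of `g` over `X`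
    (gstar : ℝ) (hgstar : ∀ z ∈ Xstar, g z = gstar)
    -- sharpness
    (hsharp : ∀ x ∈ X, μ * Metric.infDist x Xstar ≤ g x - gstar)
    -- every weak subgradient at every point of the tube `𝒯₁` has norm at most `L`
    (hbound : ∀ x ∈ X, Metric.infDist x Xstar < μ / ρ →
      ∀ v : EuclideanSpace ℝ (Fin d),
        (∀ y, g x + ⟪v, y - x⟫_ℝ - ρ / 2 * ‖y - x‖ ^ 2 ≤ g y) → ‖v‖ ≤ L)
    -- the iterate and subgradient sequences
    (x ζ : ℕ → EuclideanSpace ℝ (Fin d))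
    -- initialization in the tube `𝒯_γ`
    (hx0 : x 0 ∈ X) (hx0tube : Metric.infDist (x 0) Xstar < γ * μ / ρ)
    -- `ζ k` is a weak subgradient of `g` at `x k`
    (hζ : ∀ k, ∀ y, g (x k) + ⟪ζ k, y - x k⟫_ℝ - ρ / 2 * ‖y - x k‖ ^ 2 ≤ g y)
    -- constant-stepsize update: projection onto `X` of the normalized subgradient step
    (hupdate : ∀ k, ζ k ≠ 0 →
      x (k + 1) ∈ X ∧
      ∀ y ∈ X, dist (x k - (α / ‖ζ k‖) • ζ k) (x (k + 1)) ≤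
        dist (x k - (α / ‖ζ k‖) • ζ k) y)
    (hstop : ∀ k, ζ k = 0 → x (k + 1) = x k)
    -- the constants of the analysis
    (E : ℕ → ℝ) (hE : ∀ k, E k = Metric.infDist (x k) Xstar ^ 2)
    (Estar : ℝ) (hEstar : Estar = (α * L / (μ + Real.sqrt (μ ^ 2 - α * ρ * L))) ^ 2)
    (D : ℝ) (hD : D = Real.sqrt (max (E 0) (2 * α ^ 2 + Estar)))
    (q : ℝ) (hq : q = 1 + (α / L) * (ρ - μ / D)) :
    (0 < q ∧ q < 1) ∧ D ≤ γ * μ / ρ ∧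
      ∀ k : ℕ, Real.sqrt (E k) ≤ D ∧
        E k - Estar ≤ max (q ^ k * (E 0 - Estar)) (2 * α ^ 2) := by
  obtain ⟨hγ0, hγ1⟩ := hγ
  have hL : 0 < L := hμ.trans_le hμL
  have hγμ : γ * μ / ρ < μ / ρ := by gcongr; nlinarith
  set s := α * L / (μ + √(μ ^ 2 - α * ρ * L)) with hs
  obtain ⟨hroot, hρs, hs0, hsγ⟩ :=
    root_bounds_of_lt_stepsize hμ hρ hL hγ0.le hγ1.le hα.le hα' hs
  subst hEstar
  have hmax : 0 < max (E 0) (2 * α ^ 2 + s ^ 2) := lt_max_of_lt_right (by positivity)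
  have hD0 : 0 < D := hD ▸ Real.sqrt_pos.2 hmax
  have hαD : α < D := hD ▸ (Real.lt_sqrt hα.le).2 (lt_max_of_lt_right (by nlinarith))
  have hsD : s ^ 2 + α ^ 2 ≤ D ^ 2 := by
    rw [hD, Real.sq_sqrt hmax.le]; exact le_max_of_le_right (by nlinarith)
  have hDγ : D ≤ γ * μ / ρ := hD ▸ Real.sqrt_le_iff.2 ⟨infDist_nonneg.trans hx0tube.le,
    max_le (hE 0 ▸ pow_le_pow_left₀ infDist_nonneg hx0tube.le 2) hsγ.le⟩
  obtain ⟨hq0, hq1⟩ := contractionFactor_mem_Ioo hμ hμL hα hρ hαD (hDγ.trans_lt hγμ) hq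
  have hxX (k : ℕ) : x k ∈ X :=
    Nat.rec hx0 (fun k ih => if hz : ζ k = 0 then hstop k hz ▸ ih else (hupdate k hz).1) k
  have hXstarX : Xstar ⊆ X := by rw [hXstar]; exact fun _ h => h.1
  have hrec (k : ℕ) (hk : infDist (x k) Xstar ≤ D) :
      L * infDist (x (k + 1)) Xstar ^ 2 ≤ (L + α * ρ) * infDist (x k) Xstar ^ 2
        - 2 * α * μ * infDist (x k) Xstar + α ^ 2 * L := by
    have hk' : infDist (x k) Xstar < μ / ρ := hk.trans_lt (hDγ.trans_lt hγμ)
    exact mul_infDist_sq_le_of_step hXcv hXstarX hXstarNe hgstar (hsharp _ (hxX k)) (hζ k)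
      (hbound _ (hxX k) hk' _ (hζ k)) hα.le hρ.le (by rw [lt_div_iff₀ hρ] at hk'; linarith)
      (hupdate k) (hstop k)
  have hconv := sq_sub_sq_le_max_pow_of_recursion (e := fun k => infDist (x k) Xstar)
    hL hα.le hρ.le hμ.le hroot hρs hs0 hD0 hsD hq hq0.le hq1.le (fun _ => infDist_nonneg)
    (hD ▸ Real.le_sqrt_of_sq_le (hE 0 ▸ le_max_left _ _)) hrec
  refine ⟨⟨hq0, hq1⟩, hDγ, fun k => ?_⟩
  rw [hE, hE, Real.sqrt_sq infDist_nonneg]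
  exact hconv k

/-- **Convergence of the fixed-stepsize subgradient method.**
If `g` is `μ`-sharp on `X` with nonempty solution set `Xstar`, `0 < μ ≤ L`, `τ = μ/L`,
`γ ∈ (0,1)`, `0 < α < (γτ/√(1 + 2τ²))·(μ/ρ)`, weak subgradients on the tube `𝒯₁` are bounded
by `L` in norm, and the iterates follow the constant-stepsize subgradient method started in
`𝒯_γ`, then, with `E_k = dist²(x_k, Xstar)`, `E* = (αL/(μ + √(μ² - αρL)))²`,
`D = √(max{E₀, 2α² + E*})` and `q = 1 + (α/L)(ρ - μ/D)`, we have `q ∈ (0,1)`, `D ≤ γμ/ρ`,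
and for all `k`: `√(E_k) ≤ D` and `E_k - E* ≤ max{q^k·(E₀ - E*), 2α²}`. -/
theorem fixed_stepsize_convergence
    {d : ℕ} (hd : 1 ≤ d)
    (g : EuclideanSpace ℝ (Fin d) → ℝ) (μ ρ L γ α : ℝ)
    (hμ : 0 < μ) (hρ : 0 < ρ) (hμL : μ ≤ L) (hγ : γ ∈ Set.Ioo (0 : ℝ) 1)
    (hα : 0 < α)
    (hα' : α < (γ * (μ / L) / Real.sqrt (1 + 2 * (μ / L) ^ 2)) * (μ / ρ))
    (X Xstar : Set (EuclideanSpace ℝ (Fin d)))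
    (hXne : X.Nonempty) (hXcl : IsClosed X) (hXcv : Convex ℝ X)
    (hXstar : Xstar = {x | x ∈ X ∧ ∀ y ∈ X, g x ≤ g y})
    (hXstarNe : Xstar.Nonempty)
    -- `gstar` is the minimal value of `g` over `X`
    (gstar : ℝ) (hgstar : ∀ z ∈ Xstar, g z = gstar)
    -- sharpness
    (hsharp : ∀ x ∈ X, μ * Metric.infDist x Xstar ≤ g x - gstar)
    -- every weak subgradient at every point of the tube `𝒯₁` has norm at most `L`
    (hbound : ∀ x ∈ X, Metric.infDist x Xstar < μ / ρ →
      ∀ v : EuclideanSpace ℝ (Fin d),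
        (∀ y, g x + ⟪v, y - x⟫_ℝ - ρ / 2 * ‖y - x‖ ^ 2 ≤ g y) → ‖v‖ ≤ L)
    -- the iterate and subgradient sequences
    (x ζ : ℕ → EuclideanSpace ℝ (Fin d))
    -- initialization in the tube `𝒯_γ`
    (hx0 : x 0 ∈ X) (hx0tube : Metric.infDist (x 0) Xstar < γ * μ / ρ)
    -- `ζ k` is a weak subgradient of `g` at `x k`
    (hζ : ∀ k, ∀ y, g (x k) + ⟪ζ k, y - x k⟫_ℝ - ρ / 2 * ‖y - x k‖ ^ 2 ≤ g y)
    -- constant-stepsize update: projection onto `X` of the normalized subgradient step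
    (hupdate : ∀ k, ζ k ≠ 0 →
      x (k + 1) ∈ X ∧
      ∀ y ∈ X, dist (x k - (α / ‖ζ k‖) • ζ k) (x (k + 1)) ≤
        dist (x k - (α / ‖ζ k‖) • ζ k) y)
    (hstop : ∀ k, ζ k = 0 → x (k + 1) = x k)
    -- the constants of the analysis
    (E : ℕ → ℝ) (hE : ∀ k, E k = Metric.infDist (x k) Xstar ^ 2)
    (Estar : ℝ) (hEstar : Estar = (α * L / (μ + Real.sqrt (μ ^ 2 - α * ρ * L))) ^ 2)
    (D : ℝ) (hD : D = Real.sqrt (max (E 0) (2 * α ^ 2 + Estar)))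
    (q : ℝ) (hq : q = 1 + (α / L) * (ρ - μ / D)) :
    (0 < q ∧ q < 1) ∧ D ≤ γ * μ / ρ ∧
      ∀ k : ℕ, Real.sqrt (E k) ≤ D ∧
        E k - Estar ≤ max (q ^ k * (E 0 - Estar)) (2 * α ^ 2) :=
  fixed_stepsize_convergence_general g μ ρ L γ α hμ hρ hμL hγ hα hα' X Xstar hXcv hXstar hXstarNe
    gstar hgstar hsharp hbound x ζ hx0 hx0tube hζ hupdate hstop E hE Estar hEstar D hD q hq
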